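/- Let u, v, w ∈ E be pairwise orthogonal. Then (u × w) × (v × w) = 2 φ(u,v,w) w - ‖w‖² (u × v), where φ(u,v,w) = Σ_{i,j,k} u_i v_j w_k φ(i,j,k) = ⟪u × v, w⟫. -/

import Mathlib

open scoped BigOperators RealInnerProductSpace Matrix

noncomputable section

/-- Euclidean 7-space. -/
abbrev E7 := EuclideanSpace ℝ (Fin 7)

/-- Kronecker delta. -/
def kd (i j : Fin 7) : ℝ := if i = j then 1 else 0

/-- The totally antisymmetric 3-array with value 1 at `(a,b,c)` (for distinct `a,b,c`). -/
def tripleForm (a b c i j k : Fin 7) : ℝ :=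
  kd i a * (kd j b * kd k c - kd j c * kd k b)
  - kd i b * (kd j a * kd k c - kd j c * kd k a)
  + kd i c * (kd j a * kd k b - kd j b * kd k a)

/-- The G₂ 3-form `φ` on `ℝ⁷` (indices 0-based: φ₁₂₃ = φ(0,1,2) etc.). -/
def phi7 (i j k : Fin 7) : ℝ :=
  tripleForm 0 1 2 i j k + tripleForm 0 3 4 i j k + tripleForm 1 3 5 i j k
  + tripleForm 2 3 6 i j k + tripleForm 1 4 6 i j k
  - tripleForm 2 4 5 i j k - tripleForm 0 5 6 i j k

/-- The totally antisymmetric 4-array with value 1 at `(a,b,c,d)` (for distinct `a,b,c,d`). -/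
def quadForm (a b c d i j k l : Fin 7) : ℝ :=
  Matrix.det !![kd i a, kd i b, kd i c, kd i d;
                kd j a, kd j b, kd j c, kd j d;
                kd k a, kd k b, kd k c, kd k d;
                kd l a, kd l b, kd l c, kd l d]

/-- The 4-form `ψ = ⋆φ` on `ℝ⁷` (indices 0-based). -/
def psi7 (i j k l : Fin 7) : ℝ :=
  quadForm 3 4 5 6 i j k l + quadForm 0 2 3 5 i j k l + quadForm 1 2 5 6 i j k l
  + quadForm 0 2 4 6 i j k l + quadForm 0 1 4 5 i j k l
  - quadForm 1 2 3 4 i j k l - quadForm 0 1 3 6 i j k l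

/-- The cross product on `ℝ⁷`: `(u × v)_k = Σ_{p,q} u_p v_q φ(p,q,k)`. -/
def crossE (u v : E7) : E7 := WithLp.toLp 2 (fun k => ∑ p, ∑ q, u p * v q * phi7 p q k)

/-- The matrix `u ⌟ φ`, with entries `(u ⌟ φ)(i,j) = Σ_p u_p φ(p,i,j)`. -/
def contractPhi (u : E7) : Matrix (Fin 7) (Fin 7) ℝ :=
  Matrix.of fun i j => ∑ p, u p * phi7 p i j

/-- The matrix `u ∧ v`, with entries `u_i v_j - u_j v_i`. -/
def wedgeM (u v : E7) : Matrix (Fin 7) (Fin 7) ℝ :=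
  Matrix.of fun i j => u i * v j - u j * v i

/-- The matrix `Ψ_{uv}`, with entries `Σ_{p,q} u_p v_q ψ(p,q,i,j)`. -/
def PsiM (u v : E7) : Matrix (Fin 7) (Fin 7) ℝ :=
  Matrix.of fun i j => ∑ p, ∑ q, u p * v q * psi7 p q i j

/-- Evaluation of a matrix as a bilinear form: `X(u,v) = Σ_{i,j} u_i v_j X(i,j)`. -/
def Xform (X : Matrix (Fin 7) (Fin 7) ℝ) (u v : E7) : ℝ := ∑ i, ∑ j, u i * v j * X i j

/-- `X.mulVec v` as a map `E7 → E7`. -/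
def mulVecE (X : Matrix (Fin 7) (Fin 7) ℝ) (v : E7) : E7 := WithLp.toLp 2 (fun i => ∑ j, X i j * v j)

/-- A skew-symmetric matrix is of type `Λ²₁₄` (i.e. lies in 𝔤₂). -/
def IsType14 (X : Matrix (Fin 7) (Fin 7) ℝ) : Prop :=
  ∀ i j k : Fin 7, ∑ p, (X i p * phi7 p j k + X j p * phi7 i p k + X k p * phi7 i j p) = 0

/-- A G₂-adapted frame: an orthonormal basis `e₁,…,e₇` with
`e₃ = e₁ × e₂`, `e₅ = e₁ × e₄`, `e₆ = e₂ × e₄`, `e₇ = e₃ × e₄` (0-based indices). -/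
def IsG2Frame (e : Fin 7 → E7) : Prop :=
  Orthonormal ℝ e ∧ e 2 = crossE (e 0) (e 1) ∧ e 4 = crossE (e 0) (e 3)
  ∧ e 5 = crossE (e 1) (e 3) ∧ e 6 = crossE (e 2) (e 3)

/-- An associative 3-plane: a 3-dimensional subspace closed under the cross product. -/
def IsAssociative (P : Submodule ℝ E7) : Prop :=
  Module.finrank ℝ P = 3 ∧ ∀ u ∈ P, ∀ v ∈ P, crossE u v ∈ P

/-- `φ(u,v,w)` as a scalar. -/
def phi3 (u v w : E7) : ℝ := ∑ i, ∑ j, ∑ k, u i * v j * w k * phi7 i j k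

/-! The cross product satisfies the polarized identity
`a × (c × b) + c × (a × b) = ⟪a, b⟫ c + ⟪c, b⟫ a - 2 ⟪a, c⟫ b`, a polynomial identity checked in
coordinates, and `⟪a × b, c⟫ = φ(a, b, c)` is alternating. Applied to `(v, u, w)` the identity
gives `(u × w) × v = w × (u × v)`; applied to `(u × w, v, w)` it then gives
`(u × w) × (v × w) = φ(u, v, w) w + w × (w × (u × v))`, and its case `a = c`,
`w × (w × x) = ⟪w, x⟫ w - ‖w‖² x`, contributes the second `φ(u, v, w) w`. -/

lemma phi7_swap (i j k : Fin 7) : phi7 j i k = -phi7 i j k := by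
  simp only [phi7, tripleForm]; ring

lemma phi7_cycle (i j k : Fin 7) : phi7 j k i = phi7 i j k := by
  simp only [phi7, tripleForm]; ring

lemma crossE_apply (u v : E7) (k : Fin 7) :
    crossE u v k = ∑ p, ∑ q, u p * v q * phi7 p q k := rfl

lemma crossE_swap (u v : E7) : crossE v u = -crossE u v := by
  ext k
  rw [PiLp.neg_apply, crossE_apply, crossE_apply, Finset.sum_comm, ← Finset.sum_neg_distrib]
  refine Finset.sum_congr rfl fun p _ => ?_
  rw [← Finset.sum_neg_distrib]
  refine Finset.sum_congr rfl fun q _ => ?_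
  rw [phi7_swap]; ring

lemma crossE_neg_right (u v : E7) : crossE u (-v) = -crossE u v := by
  ext k
  simp only [crossE_apply, PiLp.neg_apply, ← Finset.sum_neg_distrib]
  refine Finset.sum_congr rfl fun p _ => Finset.sum_congr rfl fun q _ => ?_
  ring

lemma inner_crossE (u v w : E7) : ⟪crossE u v, w⟫ = phi3 u v w := by
  simp only [PiLp.inner_apply, RCLike.inner_apply, conj_trivial, crossE_apply, phi3,
    Finset.mul_sum]
  rw [Finset.sum_comm]
  refine Finset.sum_congr rfl fun i _ => ?_
  rw [Finset.sum_comm]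
  refine Finset.sum_congr rfl fun j _ => Finset.sum_congr rfl fun k _ => ?_
  ring

lemma phi3_cycle (u v w : E7) : phi3 v w u = phi3 u v w := by
  unfold phi3
  rw [Finset.sum_congr rfl fun i _ => Finset.sum_comm, Finset.sum_comm]
  refine Finset.sum_congr rfl fun k _ => Finset.sum_congr rfl fun i _ =>
    Finset.sum_congr rfl fun j _ => ?_
  rw [phi7_cycle k i j]; ring

lemma phi3_swap (u v w : E7) : phi3 v u w = -phi3 u v w := by
  rw [← inner_crossE, crossE_swap, inner_neg_left, inner_crossE]

lemma crossE_eq (a b : E7) :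
    crossE a b = !₂[a 1 * b 2 - a 2 * b 1 + a 3 * b 4 - a 4 * b 3 + a 6 * b 5 - a 5 * b 6,
      a 2 * b 0 - a 0 * b 2 + a 3 * b 5 - a 5 * b 3 + a 4 * b 6 - a 6 * b 4,
      a 0 * b 1 - a 1 * b 0 + a 3 * b 6 - a 6 * b 3 + a 5 * b 4 - a 4 * b 5,
      a 4 * b 0 - a 0 * b 4 + a 5 * b 1 - a 1 * b 5 + a 6 * b 2 - a 2 * b 6,
      a 0 * b 3 - a 3 * b 0 + a 6 * b 1 - a 1 * b 6 + a 2 * b 5 - a 5 * b 2,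
      a 1 * b 3 - a 3 * b 1 + a 0 * b 6 - a 6 * b 0 + a 4 * b 2 - a 2 * b 4,
      a 2 * b 3 - a 3 * b 2 + a 1 * b 4 - a 4 * b 1 + a 5 * b 0 - a 0 * b 5] := by
  ext k
  fin_cases k <;> simp [crossE, phi7, tripleForm, kd, Fin.sum_univ_seven] <;> ring

lemma crossE_crossE_add_crossE_crossE (a b c : E7) :
    crossE a (crossE c b) + crossE c (crossE a b)
      = ⟪a, b⟫ • c + ⟪c, b⟫ • a - (2 * ⟪a, c⟫) • b := by
  simp only [crossE_eq]
  ext i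
  fin_cases i <;> simp [PiLp.inner_apply, Fin.sum_univ_seven] <;> ring

lemma inner_crossE_right_self (u v : E7) : ⟪crossE u v, v⟫ = 0 := by
  have h := phi3_swap v v u
  rw [phi3_cycle] at h
  rw [inner_crossE]
  linarith

lemma crossE_crossE_self (a b : E7) : crossE a (crossE a b) = ⟪a, b⟫ • a - ‖a‖ ^ 2 • b := by
  have h := crossE_crossE_add_crossE_crossE a b a
  rw [real_inner_self_eq_norm_sq] at h
  refine smul_right_injective E7 (two_ne_zero (α := ℝ)) ?_
  beta_reduce
  rw [two_smul, h]
  module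

/-- Identity (4.10): for orthogonal `u, v, w`,
`(u × w) × (v × w) = 2 φ(u,v,w) w - |w|² (u × v)`. -/
theorem stmt12 (u v w : E7) (huv : ⟪u, v⟫ = 0) (huw : ⟪u, w⟫ = 0)
    (hvw : ⟪v, w⟫ = 0) :
    crossE (crossE u w) (crossE v w)
      = (2 * phi3 u v w) • w - (‖w‖ ^ 2) • crossE u v := by
  have hvu : ⟪v, u⟫ = 0 := by rw [real_inner_comm, huv]
  have hwu : ⟪w, u⟫ = 0 := by rw [real_inner_comm, huw]
  have hwv : ⟪w, v⟫ = 0 := by rw [real_inner_comm, hvw]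
  have hphi : phi3 u w v = -phi3 u v w := by rw [← phi3_cycle, phi3_swap, phi3_cycle]
  have hvwu : crossE v (crossE w u) + crossE w (crossE v u) = 0 := by
    rw [crossE_crossE_add_crossE_crossE, hvu, hwu, hvw]; simp
  have hmove : crossE (crossE u w) v = crossE w (crossE u v) := calc
    crossE (crossE u w) v = -crossE v (crossE u w) := crossE_swap _ _
    _ = crossE v (crossE w u) := by rw [crossE_swap w u, crossE_neg_right, neg_neg]
    _ = -crossE w (crossE v u) := eq_neg_of_add_eq_zero_left hvwu
    _ = crossE w (crossE u v) := by rw [crossE_swap u v, crossE_neg_right, neg_neg]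
  have hsplit : crossE (crossE u w) (crossE w v) + crossE w (crossE (crossE u w) v)
      = -phi3 u v w • w := by
    rw [crossE_crossE_add_crossE_crossE, inner_crossE, hphi, hwv, inner_crossE_right_self]; simp
  calc crossE (crossE u w) (crossE v w)
      = -crossE (crossE u w) (crossE w v) := by rw [crossE_swap w v, crossE_neg_right]
    _ = phi3 u v w • w + crossE w (crossE w (crossE u v)) := by
      rw [← hmove]; linear_combination (norm := module) -hsplit
    _ = (2 * phi3 u v w) • w - (‖w‖ ^ 2) • crossE u v := by
      rw [crossE_crossE_self, real_inner_comm, inner_crossE]; module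

end
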